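/- arXiv:2211.01171 — 8 statements merged into one kernel-verified Lean document; each statement's English description precedes it below -/
import Mathlib

section
/- Let g be an entropy dissipative two-point flux with respect to entropy variables v and potential ψ, and let G be its associated numerical entropy flux. Then for every sequence of states u : ℤ → E and every k ∈ ℤ, the semidiscrete per-cell entropy inequality holds: ⟨v(u_k), g(u_{k−1}, u_k) − g(u_k, u_{k+1})⟩ ≤ G(u_{k−1}, u_k) − G(u_k, u_{k+1}). -/
/-!
Writing `F` for the numerical entropy flux, dissipativity of `g` on the interface `(a, b)` says
exactly that `F(a, b)` lies between `⟪v b, g(a, b)⟫ - ψ b` and `⟪v a, g(a, b)⟫ - ψ a`. Applied at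
the two interfaces of cell `k`, the upper bound on the left interface and the lower bound on the
right one involve the same state `u k`, and subtracting them gives the per-cell inequality.
-/

open RealInnerProductSpace

variable {E : Type*} [NormedAddCommGroup E] [InnerProductSpace ℝ E]

def IsEntropyDissipative (g : E × E → E) (v : E → E) (ψ : E → ℝ) : Prop :=
  ∀ a b, ⟪v b - v a, g (a, b)⟫ ≤ ψ b - ψ a

noncomputable def numericalEntropyFlux (g : E × E → E) (v : E → E) (ψ : E → ℝ) (a b : E) : ℝ :=
  (1 / 2) * ⟪v a + v b, g (a, b)⟫ - (1 / 2) * (ψ a + ψ b)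

namespace IsEntropyDissipative

variable {g : E × E → E} {v : E → E} {ψ : E → ℝ}

theorem inner_right_sub_le_numericalEntropyFlux (h : IsEntropyDissipative g v ψ) (a b : E) :
    ⟪v b, g (a, b)⟫ - ψ b ≤ numericalEntropyFlux g v ψ a b := by
  have hab := h a b
  rw [inner_sub_left] at hab
  rw [numericalEntropyFlux, inner_add_left]
  linarith

theorem numericalEntropyFlux_le_inner_left_sub (h : IsEntropyDissipative g v ψ) (a b : E) :
    numericalEntropyFlux g v ψ a b ≤ ⟪v a, g (a, b)⟫ - ψ a := by
  have hab := h a b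
  rw [inner_sub_left] at hab
  rw [numericalEntropyFlux, inner_add_left]
  linarith

theorem inner_sub_le_numericalEntropyFlux_sub (h : IsEntropyDissipative g v ψ) (a b c : E) :
    ⟪v b, g (a, b) - g (b, c)⟫
      ≤ numericalEntropyFlux g v ψ a b - numericalEntropyFlux g v ψ b c := by
  have hleft := h.inner_right_sub_le_numericalEntropyFlux a b
  have hright := h.numericalEntropyFlux_le_inner_left_sub b c
  rw [inner_sub_right]
  linarith

end IsEntropyDissipative

theorem entropy_dissipative_flux_per_cell_inequality_general
    (N : ℕ)
    (g : EuclideanSpace ℝ (Fin N) × EuclideanSpace ℝ (Fin N) → EuclideanSpace ℝ (Fin N))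
    (v : EuclideanSpace ℝ (Fin N) → EuclideanSpace ℝ (Fin N))
    (ψ : EuclideanSpace ℝ (Fin N) → ℝ)
    (hED : ∀ a b, ⟪v b - v a, g (a, b)⟫ ≤ ψ b - ψ a)
    (G : EuclideanSpace ℝ (Fin N) → EuclideanSpace ℝ (Fin N) → ℝ)
    (hG : ∀ a b, G a b = (1 / 2) * ⟪v a + v b, g (a, b)⟫ - (1 / 2) * (ψ a + ψ b)) :
    ∀ (u : ℤ → EuclideanSpace ℝ (Fin N)) (k : ℤ),
      ⟪v (u k), g (u (k - 1), u k) - g (u k, u (k + 1))⟫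
        ≤ G (u (k - 1)) (u k) - G (u k) (u (k + 1)) := by
  have hG_eq : G = numericalEntropyFlux g v ψ := funext₂ hG
  subst hG_eq
  intro u k
  exact IsEntropyDissipative.inner_sub_le_numericalEntropyFlux_sub hED _ _ _

/-- Semidiscrete per-cell entropy inequality: for an entropy dissipative two-point
flux `g` with associated numerical entropy flux `G`, for every sequence of states
`u : ℤ → E` and every `k ∈ ℤ`,
`⟨v(u_k), g(u_{k−1}, u_k) − g(u_k, u_{k+1})⟩ ≤ G(u_{k−1}, u_k) − G(u_k, u_{k+1})`. -/
theorem entropy_dissipative_flux_per_cell_inequality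
    (N : ℕ) (hN : 1 ≤ N)
    (g : EuclideanSpace ℝ (Fin N) × EuclideanSpace ℝ (Fin N) → EuclideanSpace ℝ (Fin N))
    (v : EuclideanSpace ℝ (Fin N) → EuclideanSpace ℝ (Fin N))
    (ψ : EuclideanSpace ℝ (Fin N) → ℝ)
    (hED : ∀ a b, ⟪v b - v a, g (a, b)⟫ ≤ ψ b - ψ a)
    (G : EuclideanSpace ℝ (Fin N) → EuclideanSpace ℝ (Fin N) → ℝ)
    (hG : ∀ a b, G a b = (1 / 2) * ⟪v a + v b, g (a, b)⟫ - (1 / 2) * (ψ a + ψ b)) :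
    ∀ (u : ℤ → EuclideanSpace ℝ (Fin N)) (k : ℤ),
      ⟪v (u k), g (u (k - 1), u k) - g (u k, u (k + 1))⟫
        ≤ G (u (k - 1)) (u k) - G (u k) (u (k + 1)) :=
  entropy_dissipative_flux_per_cell_inequality_general N g v ψ hED G hG
end

section
/- For any two-point flux h : E × E → E, any sequence of states u : ℤ → E, any p ≥ 1 and any coefficients c_1, …, c_p ∈ ℝ, the LMR fluxes f_{k+1/2} := ∑_{r=1}^{p} c_r ∑_{q=0}^{r−1} h(u_{k−q}, u_{k+r−q}) satisfy the telescoping identity f_{k−1/2} − f_{k+1/2} = ∑_{r=1}^{p} c_r ( h(u_{k−r}, u_k) − h(u_k, u_{k+r}) ) for every k ∈ ℤ. -/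
open Finset

/-- Shifting `k ↦ k - 1` turns the `q`-th term into the `(q + 1)`-th, so the difference telescopes
to the last term minus the first. -/
theorem sum_range_two_point_pred_sub {α M : Type*} [AddCommGroup M] (h : α × α → M) (u : ℤ → α)
    (k : ℤ) (r : ℕ) :
    ∑ q ∈ range r, h (u ((k - 1) - (q : ℤ)), u ((k - 1) + (r : ℤ) - (q : ℤ)))
      - ∑ q ∈ range r, h (u (k - (q : ℤ)), u (k + (r : ℤ) - (q : ℤ)))
      = h (u (k - (r : ℤ)), u k) - h (u k, u (k + (r : ℤ))) := by
  set g : ℕ → M := fun q => h (u (k - (q : ℤ)), u (k + (r : ℤ) - (q : ℤ)))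
  have hshift : ∀ q : ℕ, h (u ((k - 1) - (q : ℤ)), u ((k - 1) + (r : ℤ) - (q : ℤ))) = g (q + 1) :=
    fun q => by simp only [g]; congr 3 <;> push_cast <;> ring
  simp only [hshift, ← sum_sub_distrib, sum_range_sub g r, g, add_sub_cancel_right,
    Nat.cast_zero, sub_zero]

theorem lmr_flux_telescoping_general
    (N : ℕ)
    (h : EuclideanSpace ℝ (Fin N) × EuclideanSpace ℝ (Fin N) → EuclideanSpace ℝ (Fin N))
    (u : ℤ → EuclideanSpace ℝ (Fin N))
    (p : ℕ) (c : ℕ → ℝ) (k : ℤ) :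
    (∑ r ∈ Finset.Icc 1 p, c r •
        ∑ q ∈ Finset.range r, h (u ((k - 1) - (q : ℤ)), u ((k - 1) + (r : ℤ) - (q : ℤ))))
      - (∑ r ∈ Finset.Icc 1 p, c r •
          ∑ q ∈ Finset.range r, h (u (k - (q : ℤ)), u (k + (r : ℤ) - (q : ℤ))))
      = ∑ r ∈ Finset.Icc 1 p, c r •
          (h (u (k - (r : ℤ)), u k) - h (u k, u (k + (r : ℤ)))) := by
  rw [← sum_sub_distrib]
  refine sum_congr rfl fun r _ => ?_
  rw [← smul_sub, sum_range_two_point_pred_sub]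

/-- Telescoping identity for the LMR fluxes: with
`f_{k+1/2} := ∑_{r=1}^{p} c_r ∑_{q=0}^{r−1} h(u_{k−q}, u_{k+r−q})`, one has
`f_{k−1/2} − f_{k+1/2} = ∑_{r=1}^{p} c_r (h(u_{k−r}, u_k) − h(u_k, u_{k+r}))`. -/
theorem lmr_flux_telescoping
    (N : ℕ) (hN : 1 ≤ N)
    (h : EuclideanSpace ℝ (Fin N) × EuclideanSpace ℝ (Fin N) → EuclideanSpace ℝ (Fin N))
    (u : ℤ → EuclideanSpace ℝ (Fin N))
    (p : ℕ) (hp : 1 ≤ p) (c : ℕ → ℝ) (k : ℤ) :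
    (∑ r ∈ Finset.Icc 1 p, c r •
        ∑ q ∈ Finset.range r, h (u ((k - 1) - (q : ℤ)), u ((k - 1) + (r : ℤ) - (q : ℤ))))
      - (∑ r ∈ Finset.Icc 1 p, c r •
          ∑ q ∈ Finset.range r, h (u (k - (q : ℤ)), u (k + (r : ℤ) - (q : ℤ))))
      = ∑ r ∈ Finset.Icc 1 p, c r •
          (h (u (k - (r : ℤ)), u k) - h (u k, u (k + (r : ℤ)))) :=
  lmr_flux_telescoping_general N h u p c k
end

section
/- Let h be an entropy conservative two-point flux with respect to entropy variables v and potential ψ, with associated numerical entropy flux H. For any sequence of states u : ℤ → E, any p ≥ 1 and any coefficients c_1, …, c_p ∈ ℝ, define the LMR flux f_{k+1/2} := ∑_{r=1}^{p} c_r ∑_{q=0}^{r−1} h(u_{k−q}, u_{k+r−q}) and the LMR entropy flux F_{k+1/2} := ∑_{r=1}^{p} c_r ∑_{q=0}^{r−1} H(u_{k−q}, u_{k+r−q}). Then for every k ∈ ℤ the per-cell entropy conservation identity holds: ⟨v(u_k), f_{k−1/2} − f_{k+1/2}⟩ = F_{k−1/2} − F_{k+1/2}. -/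
/-!
The LMR flux at an interface is a combination of the stencil sums
`∑_{q<r} h(u_{k-q}, u_{k+r-q})`, and the stencil sums at `k - 1/2` and `k + 1/2` share all
but one term each, so their difference telescopes to `h(u_{k-r}, u_k) - h(u_k, u_{k+r})`.
Both surviving fluxes have `u_k` as an endpoint, and entropy conservation gives
`⟨v(b), h(a,b)⟩ = H(a,b) + ψ(b)` and `⟨v(a), h(a,b)⟩ = H(a,b) + ψ(a)`, so the `ψ(u_k)` terms cancel.
-/

open Finset RealInnerProductSpace

section Stencil

variable {R M : Type*} [Ring R] [AddCommGroup M] [Module R M]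

/-- The argument `k` stands for the interface `k + 1/2`. -/
def stencilSum (g : ℤ → ℤ → M) (r : ℕ) (k : ℤ) : M :=
  ∑ q ∈ range r, g (k - q) (k + r - q)

def lmrFlux (c : ℕ → R) (p : ℕ) (g : ℤ → ℤ → M) (k : ℤ) : M :=
  ∑ r ∈ Icc 1 p, c r • stencilSum g r k

theorem stencilSum_sub_one_sub (g : ℤ → ℤ → M) (r : ℕ) (k : ℤ) :
    stencilSum g r (k - 1) - stencilSum g r k = g (k - r) k - g k (k + r) := by
  have shift : ∀ q : ℕ, g (k - 1 - q) (k - 1 + r - q) = g (k - (q + 1 : ℕ)) (k + r - (q + 1 : ℕ)) :=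
    fun q => by congr 1 <;> push_cast <;> ring
  simp only [stencilSum, shift, ← sum_sub_distrib]
  rw [sum_range_sub (fun q : ℕ => g (k - q) (k + r - q))]
  simp

theorem lmrFlux_sub_one_sub (c : ℕ → R) (p : ℕ) (g : ℤ → ℤ → M) (k : ℤ) :
    lmrFlux c p g (k - 1) - lmrFlux c p g k =
      ∑ r ∈ Icc 1 p, c r • (g (k - r) k - g k (k + r)) := by
  simp only [lmrFlux, ← sum_sub_distrib, ← smul_sub, stencilSum_sub_one_sub]

end Stencil

section EntropyConservative

variable {E : Type*} [NormedAddCommGroup E] [InnerProductSpace ℝ E]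
  {h : E × E → E} {v : E → E} {ψ : E → ℝ} {H : E → E → ℝ}

theorem inner_sub_flux_eq_sub_entropyFlux
    (hEC : ∀ a b, ⟪v b - v a, h (a, b)⟫ = ψ b - ψ a)
    (hH : ∀ a b, H a b = (1 / 2) * ⟪v a + v b, h (a, b)⟫ - (1 / 2) * (ψ a + ψ b))
    (a b c : E) :
    ⟪v b, h (a, b) - h (b, c)⟫ = H a b - H b c := by
  have left := hEC a b
  have right := hEC b c
  rw [inner_sub_left] at left right
  rw [inner_sub_right, hH, hH, inner_add_left, inner_add_left]
  linarith

end EntropyConservative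

theorem lmr_flux_per_cell_entropy_conservation_general
    (N : ℕ)
    (h : EuclideanSpace ℝ (Fin N) × EuclideanSpace ℝ (Fin N) → EuclideanSpace ℝ (Fin N))
    (v : EuclideanSpace ℝ (Fin N) → EuclideanSpace ℝ (Fin N))
    (ψ : EuclideanSpace ℝ (Fin N) → ℝ)
    (hEC : ∀ a b, ⟪v b - v a, h (a, b)⟫ = ψ b - ψ a)
    (H : EuclideanSpace ℝ (Fin N) → EuclideanSpace ℝ (Fin N) → ℝ)
    (hH : ∀ a b, H a b = (1 / 2) * ⟪v a + v b, h (a, b)⟫ - (1 / 2) * (ψ a + ψ b))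
    (u : ℤ → EuclideanSpace ℝ (Fin N))
    (p : ℕ) (c : ℕ → ℝ) (k : ℤ) :
    ⟪v (u k),
        (∑ r ∈ Finset.Icc 1 p, c r •
            ∑ q ∈ Finset.range r, h (u ((k - 1) - (q : ℤ)), u ((k - 1) + (r : ℤ) - (q : ℤ))))
          - (∑ r ∈ Finset.Icc 1 p, c r •
              ∑ q ∈ Finset.range r, h (u (k - (q : ℤ)), u (k + (r : ℤ) - (q : ℤ))))⟫
      = (∑ r ∈ Finset.Icc 1 p, c r *
            ∑ q ∈ Finset.range r, H (u ((k - 1) - (q : ℤ))) (u ((k - 1) + (r : ℤ) - (q : ℤ))))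
          - (∑ r ∈ Finset.Icc 1 p, c r *
              ∑ q ∈ Finset.range r, H (u (k - (q : ℤ))) (u (k + (r : ℤ) - (q : ℤ)))) := by
  change ⟪v (u k), lmrFlux c p (fun i j => h (u i, u j)) (k - 1)
      - lmrFlux c p (fun i j => h (u i, u j)) k⟫
    = lmrFlux c p (fun i j => H (u i) (u j)) (k - 1) - lmrFlux c p (fun i j => H (u i) (u j)) k
  rw [lmrFlux_sub_one_sub, lmrFlux_sub_one_sub, inner_sum]
  refine sum_congr rfl fun r _ => ?_
  rw [real_inner_smul_right, inner_sub_flux_eq_sub_entropyFlux hEC hH, smul_eq_mul]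

/-- Per-cell entropy conservation for the LMR fluxes: with
`f_{k+1/2} := ∑_{r=1}^{p} c_r ∑_{q=0}^{r−1} h(u_{k−q}, u_{k+r−q})` and
`F_{k+1/2} := ∑_{r=1}^{p} c_r ∑_{q=0}^{r−1} H(u_{k−q}, u_{k+r−q})`, one has
`⟨v(u_k), f_{k−1/2} − f_{k+1/2}⟩ = F_{k−1/2} − F_{k+1/2}`. -/
theorem lmr_flux_per_cell_entropy_conservation
    (N : ℕ) (hN : 1 ≤ N)
    (h : EuclideanSpace ℝ (Fin N) × EuclideanSpace ℝ (Fin N) → EuclideanSpace ℝ (Fin N))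
    (v : EuclideanSpace ℝ (Fin N) → EuclideanSpace ℝ (Fin N))
    (ψ : EuclideanSpace ℝ (Fin N) → ℝ)
    (hEC : ∀ a b, ⟪v b - v a, h (a, b)⟫ = ψ b - ψ a)
    (H : EuclideanSpace ℝ (Fin N) → EuclideanSpace ℝ (Fin N) → ℝ)
    (hH : ∀ a b, H a b = (1 / 2) * ⟪v a + v b, h (a, b)⟫ - (1 / 2) * (ψ a + ψ b))
    (u : ℤ → EuclideanSpace ℝ (Fin N))
    (p : ℕ) (hp : 1 ≤ p) (c : ℕ → ℝ) (k : ℤ) :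
    ⟪v (u k),
        (∑ r ∈ Finset.Icc 1 p, c r •
            ∑ q ∈ Finset.range r, h (u ((k - 1) - (q : ℤ)), u ((k - 1) + (r : ℤ) - (q : ℤ))))
          - (∑ r ∈ Finset.Icc 1 p, c r •
              ∑ q ∈ Finset.range r, h (u (k - (q : ℤ)), u (k + (r : ℤ) - (q : ℤ))))⟫
      = (∑ r ∈ Finset.Icc 1 p, c r *
            ∑ q ∈ Finset.range r, H (u ((k - 1) - (q : ℤ))) (u ((k - 1) + (r : ℤ) - (q : ℤ))))
          - (∑ r ∈ Finset.Icc 1 p, c r *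
              ∑ q ∈ Finset.range r, H (u (k - (q : ℤ))) (u (k + (r : ℤ) - (q : ℤ)))) :=
  lmr_flux_per_cell_entropy_conservation_general N h v ψ hEC H hH u p c k
end

section
/- Let h : E × E → E be a C^1 two-point flux that is symmetric (h(a,b) = h(b,a) for all a, b) and consistent with f : E → E (h(a,a) = f(a) for all a). Then f is differentiable, and for every a ∈ E the Fréchet derivative of the map b ↦ h(a,b) at the point b = a equals (1/2) • (fderiv ℝ f a). -/
/-!
Write `D` for the derivative of `h` at `(a, a)`. Symmetry makes `b ↦ h (b, a)` and `b ↦ h (a, b)`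
the same map, so the two partial derivatives `D ∘ inl` and `D ∘ inr` coincide. The chain rule along
the diagonal then gives `f' a = D ∘ inl + D ∘ inr = 2 • (D ∘ inr)`, and `D ∘ inr` is the derivative
of `b ↦ h (a, b)` at `a`.
-/

section SymmetricTwoPoint

variable {𝕜 E F G : Type*} [NontriviallyNormedField 𝕜] [NormedAddCommGroup E] [NormedSpace 𝕜 E]
  [NormedAddCommGroup F] [NormedSpace 𝕜 F] [NormedAddCommGroup G] [NormedSpace 𝕜 G]

theorem HasFDerivAt.comp_prodMk_left {h : E × F → G} {D : E × F →L[𝕜] G} {x : E} {y : F}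
    (hD : HasFDerivAt h D (x, y)) : HasFDerivAt (fun x' => h (x', y)) (D.comp (.inl 𝕜 E F)) x :=
  hD.comp (f := fun x' => (x', y)) x (hasFDerivAt_prodMk_left x y)

theorem HasFDerivAt.comp_prodMk_right {h : E × F → G} {D : E × F →L[𝕜] G} {x : E} {y : F}
    (hD : HasFDerivAt h D (x, y)) : HasFDerivAt (fun y' => h (x, y')) (D.comp (.inr 𝕜 E F)) y :=
  hD.comp y (hasFDerivAt_prodMk_right x y)

variable {h : E × E → F} {D : E × E →L[𝕜] F} {a : E}

theorem HasFDerivAt.comp_inl_eq_comp_inr_of_symm (hD : HasFDerivAt h D (a, a))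
    (hsym : ∀ x y, h (x, y) = h (y, x)) :
    D.comp (.inl 𝕜 E E) = D.comp (.inr 𝕜 E E) := by
  have hright := hD.comp_prodMk_right
  simp only [hsym a] at hright
  exact hD.comp_prodMk_left.unique hright

theorem HasFDerivAt.diag_of_symm (hD : HasFDerivAt h D (a, a))
    (hsym : ∀ x y, h (x, y) = h (y, x)) :
    HasFDerivAt (fun x => h (x, x)) (2 • D.comp (.inr 𝕜 E E)) a := by
  refine (hD.comp (f := fun x => (x, x)) a
    ((hasFDerivAt_id a).prodMk (hasFDerivAt_id a))).congr_fderiv ?_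
  ext x
  have hpartial := congr($(hD.comp_inl_eq_comp_inr_of_symm hsym) x)
  simp only [ContinuousLinearMap.comp_apply, ContinuousLinearMap.inl_apply,
    ContinuousLinearMap.inr_apply] at hpartial
  simp only [two_smul, add_apply, ContinuousLinearMap.comp_apply,
    ContinuousLinearMap.inr_apply, ContinuousLinearMap.prod_apply,
    ContinuousLinearMap.coe_id', id_eq]
  calc D (x, x) = D ((x, 0) + (0, x)) := by rw [Prod.mk_add_mk, add_zero, zero_add]
    _ = D (0, x) + D (0, x) := by rw [map_add, hpartial]

end SymmetricTwoPoint

theorem symmetric_consistent_flux_derivative_general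
    (N : ℕ)
    (h : EuclideanSpace ℝ (Fin N) × EuclideanSpace ℝ (Fin N) → EuclideanSpace ℝ (Fin N))
    (hC1 : ContDiff ℝ 1 h)
    (hsym : ∀ a b, h (a, b) = h (b, a))
    (f : EuclideanSpace ℝ (Fin N) → EuclideanSpace ℝ (Fin N))
    (hcons : ∀ a, h (a, a) = f a) :
    Differentiable ℝ f ∧
      ∀ a, fderiv ℝ (fun b => h (a, b)) a = (1 / 2 : ℝ) • fderiv ℝ f a := by
  obtain rfl : (fun x => h (x, x)) = f := funext hcons
  have hD : ∀ a, HasFDerivAt h (fderiv ℝ h (a, a)) (a, a) := fun a =>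
    ((hC1.differentiable one_ne_zero) (a, a)).hasFDerivAt
  refine ⟨fun a => ((hD a).diag_of_symm hsym).differentiableAt, fun a => ?_⟩
  rw [((hD a).diag_of_symm hsym).fderiv, (hD a).comp_prodMk_right.fderiv, ← ofNat_smul_eq_nsmul ℝ,
    smul_smul]
  norm_num

/-- For a `C¹` symmetric two-point flux `h` consistent with `f`, the flux function `f`
is differentiable and the Fréchet derivative of `b ↦ h(a,b)` at `b = a` equals
`(1/2) • fderiv ℝ f a`. -/
theorem symmetric_consistent_flux_derivative
    (N : ℕ) (hN : 1 ≤ N)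
    (h : EuclideanSpace ℝ (Fin N) × EuclideanSpace ℝ (Fin N) → EuclideanSpace ℝ (Fin N))
    (hC1 : ContDiff ℝ 1 h)
    (hsym : ∀ a b, h (a, b) = h (b, a))
    (f : EuclideanSpace ℝ (Fin N) → EuclideanSpace ℝ (Fin N))
    (hcons : ∀ a, h (a, a) = f a) :
    Differentiable ℝ f ∧
      ∀ a, fderiv ℝ (fun b => h (a, b)) a = (1 / 2 : ℝ) • fderiv ℝ f a :=
  symmetric_consistent_flux_derivative_general N h hC1 hsym f hcons
end

section
/- Let h : E × E → E be a C^∞ two-point flux that is symmetric and consistent with f : E → E, and let u : ℝ → E be C^∞. Then for every x₀ ∈ ℝ, the function x ↦ h(u(x₀), u(x)) − f(u(x₀)) − ((x − x₀)/2) · (f ∘ u)'(x₀) is O((x − x₀)^2) as x → x₀. In other words, a symmetric consistent two-point flux evaluated along a smooth curve expands as h(u(x₀), u(x)) = f(u(x₀)) + (1/2)(f∘u)'(x₀)(x − x₀) + O((x − x₀)^2). -/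
open Filter Topology Asymptotics

/-- Second-order Taylor bound: for a smooth `g : ℝ → F`,
`g x - g x₀ - (x - x₀) • g'(x₀) = O((x - x₀)^2)` near `x₀`. -/
lemma second_order_bigO_aux {F : Type*} [NormedAddCommGroup F] [NormedSpace ℝ F]
    {g : ℝ → F} (hg : ContDiff ℝ (⊤ : ℕ∞) g) (x₀ : ℝ) :
    (fun x => g x - g x₀ - (x - x₀) • deriv g x₀) =O[𝓝 x₀] fun x => (x - x₀) ^ 2 := by
  have hdg : ContDiff ℝ (⊤ : ℕ∞) (deriv g) :=
    (contDiff_infty_iff_deriv.mp (hg.of_le (by simp))).2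
  have hO : (fun c => deriv g c - deriv g x₀) =O[𝓝 x₀] fun c => c - x₀ :=
    (hdg.differentiable (by simp) x₀).isBigO_sub
  obtain ⟨C, hC⟩ := hO.bound
  obtain ⟨δ, hδ, hball⟩ := Metric.eventually_nhds_iff.mp hC
  set C' := max C 0 with hC'
  have hC'0 : 0 ≤ C' := le_max_right _ _
  rw [Asymptotics.isBigO_iff]
  refine ⟨C', ?_⟩
  filter_upwards [Metric.ball_mem_nhds x₀ hδ] with x hx
  set G : ℝ → F := fun c => g c - c • deriv g x₀ with hG
  have hseg : segment ℝ x₀ x ⊆ Metric.ball x₀ δ :=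
    (convex_ball x₀ δ).segment_subset (Metric.mem_ball_self hδ) hx
  have hder : ∀ c ∈ segment ℝ x₀ x,
      HasDerivWithinAt G (deriv g c - deriv g x₀) (segment ℝ x₀ x) c := by
    intro c _
    have h1 : HasDerivAt g (deriv g c) c := (hg.differentiable (by simp) c).hasDerivAt
    have h2 : HasDerivAt (fun c : ℝ => c • deriv g x₀) (deriv g x₀) c := by
      simpa using (hasDerivAt_id c).smul_const (deriv g x₀)
    exact (h1.sub h2).hasDerivWithinAt
  have hbound : ∀ c ∈ segment ℝ x₀ x, ‖deriv g c - deriv g x₀‖ ≤ C' * ‖x - x₀‖ := by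
    intro c hc
    have hcball : c ∈ Metric.ball x₀ δ := hseg hc
    have h1 : ‖deriv g c - deriv g x₀‖ ≤ C * ‖c - x₀‖ := by
      apply hball
      simpa [dist_eq_norm] using hcball
    have h2 : ‖c - x₀‖ ≤ ‖x - x₀‖ := by
      have : c ∈ Metric.closedBall x₀ ‖x - x₀‖ := by
        apply (convex_closedBall x₀ ‖x - x₀‖).segment_subset _ _ hc
        · simp
        · simp [Metric.mem_closedBall, dist_eq_norm]
      simpa [Metric.mem_closedBall, dist_eq_norm] using this
    calc ‖deriv g c - deriv g x₀‖ ≤ C * ‖c - x₀‖ := h1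
      _ ≤ C' * ‖c - x₀‖ := by
          apply mul_le_mul_of_nonneg_right (le_max_left _ _) (norm_nonneg _)
      _ ≤ C' * ‖x - x₀‖ := mul_le_mul_of_nonneg_left h2 hC'0
  have hmv := Convex.norm_image_sub_le_of_norm_hasDerivWithin_le hder hbound
    (convex_segment x₀ x) (left_mem_segment ℝ x₀ x) (right_mem_segment ℝ x₀ x)
  have hGx : G x - G x₀ = g x - g x₀ - (x - x₀) • deriv g x₀ := by
    simp only [hG, sub_smul]
    abel
  rw [hGx] at hmv
  calc ‖g x - g x₀ - (x - x₀) • deriv g x₀‖ ≤ C' * ‖x - x₀‖ * ‖x - x₀‖ := hmv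
    _ = C' * ‖(x - x₀) ^ 2‖ := by rw [mul_assoc, ← norm_mul, sq]

/-- Expansion of a smooth symmetric consistent two-point flux along a smooth curve:
`h(u(x₀), u(x)) = f(u(x₀)) + ((x − x₀)/2)·(f∘u)'(x₀) + O((x − x₀)²)` as `x → x₀`. -/
theorem symmetric_consistent_flux_expansion
    (N : ℕ) (hN : 1 ≤ N)
    (h : EuclideanSpace ℝ (Fin N) × EuclideanSpace ℝ (Fin N) → EuclideanSpace ℝ (Fin N))
    (hsmooth : ContDiff ℝ (⊤ : ℕ∞) h)
    (hsym : ∀ a b, h (a, b) = h (b, a))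
    (f : EuclideanSpace ℝ (Fin N) → EuclideanSpace ℝ (Fin N))
    (hcons : ∀ a, h (a, a) = f a)
    (u : ℝ → EuclideanSpace ℝ (Fin N)) (hu : ContDiff ℝ (⊤ : ℕ∞) u)
    (x₀ : ℝ) :
    (fun x : ℝ =>
        h (u x₀, u x) - f (u x₀) - ((x - x₀) / 2) • deriv (fun t => f (u t)) x₀)
      =O[𝓝 x₀] fun x : ℝ => (x - x₀) ^ 2 := by
  set g : ℝ → EuclideanSpace ℝ (Fin N) := fun x => h (u x₀, u x) with hgdef
  have hgC : ContDiff ℝ (⊤ : ℕ∞) g := hsmooth.comp (ContDiff.prodMk (contDiff_const (c := u x₀)) hu)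
  set φ := fderiv ℝ h (u x₀, u x₀) with hφdef
  set u' := deriv u x₀ with hu'def
  have hhd : HasFDerivAt h φ (u x₀, u x₀) :=
    (hsmooth.differentiable (by simp) _).hasFDerivAt
  have hud : HasDerivAt u u' x₀ := (hu.differentiable (by simp) x₀).hasDerivAt
  -- derivative of g
  have hgd : HasDerivAt g (φ (0, u')) x₀ := by
    have hp : HasDerivAt (fun x : ℝ => (u x₀, u x)) ((0 : EuclideanSpace ℝ (Fin N)), u') x₀ :=
      (hasDerivAt_const x₀ (u x₀)).prodMk hud
    exact hhd.comp_hasDerivAt x₀ hp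
  -- derivative of f ∘ u
  have hfud : HasDerivAt (fun t => f (u t)) (φ (u', u')) x₀ := by
    have hp : HasDerivAt (fun x : ℝ => (u x, u x)) (u', u') x₀ := hud.prodMk hud
    have := hhd.comp_hasDerivAt x₀ hp
    refine HasDerivAt.congr_deriv (this.congr_of_eventuallyEq ?_) rfl
    filter_upwards with t using (hcons (u t)).symm
  -- symmetry of the derivative
  have hswap : φ (u', 0) = φ (0, u') := by
    set σ := ContinuousLinearEquiv.prodComm ℝ (EuclideanSpace ℝ (Fin N)) (EuclideanSpace ℝ (Fin N)) with hσ
    have hcomp : h ∘ σ = h := by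
      funext p
      exact hsym p.2 p.1
    have h1 : HasFDerivAt (h ∘ σ)
        (φ.comp (σ : (EuclideanSpace ℝ (Fin N) × EuclideanSpace ℝ (Fin N)) →L[ℝ]
        EuclideanSpace ℝ (Fin N) × EuclideanSpace ℝ (Fin N))) (u x₀, u x₀) := by
      have hσd : HasFDerivAt σ (σ : (EuclideanSpace ℝ (Fin N) × EuclideanSpace ℝ (Fin N)) →L[ℝ]
        EuclideanSpace ℝ (Fin N) × EuclideanSpace ℝ (Fin N)) (u x₀, u x₀) :=
        σ.hasFDerivAt
      have : HasFDerivAt h φ (σ (u x₀, u x₀)) := by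
        simpa [hσ] using hhd
      exact this.comp _ hσd
    rw [hcomp] at h1
    have heq : φ.comp (σ : (EuclideanSpace ℝ (Fin N) × EuclideanSpace ℝ (Fin N)) →L[ℝ]
        EuclideanSpace ℝ (Fin N) × EuclideanSpace ℝ (Fin N)) = φ := h1.unique hhd
    have h2 : φ (u', 0) = (φ.comp (σ : (EuclideanSpace ℝ (Fin N) × EuclideanSpace ℝ (Fin N)) →L[ℝ]
        EuclideanSpace ℝ (Fin N) × EuclideanSpace ℝ (Fin N))) (0, u') := by
      simp [hσ, ContinuousLinearMap.comp_apply]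
    rw [h2, heq]
  have key : deriv (fun t => f (u t)) x₀ = (2 : ℝ) • φ (0, u') := by
    rw [hfud.deriv]
    have : ((u', u') : EuclideanSpace ℝ (Fin N) × EuclideanSpace ℝ (Fin N)) = (u', 0) + (0, u') := by simp
    rw [this, map_add, hswap, two_smul]
  have hO := second_order_bigO_aux hgC x₀
  refine hO.congr' ?_ (by rfl)
  filter_upwards with x
  have hg0 : g x₀ = f (u x₀) := hcons (u x₀)
  rw [hgd.deriv, hg0, key]
  congr 1
  rw [smul_smul]
  congr 1
  ring
end

section
/- Let h : E × E → E be a symmetric two-point flux, u : ℤ → E a sequence of states, p ≥ 1 and c_1, …, c_p ∈ ℝ. Define the matrix A indexed by l, m ∈ {−p+1, …, p} by A_{lm} = c_{|l−m|}/2 if min(l,m) ≤ 0 < max(l,m) and |l−m| ≤ p, and A_{lm} = 0 otherwise (in particular A_{ll} = 0 for all l). Then for every k ∈ ℤ the LMR flux admits the matrix representation ∑_{r=1}^{p} c_r ∑_{q=0}^{r−1} h(u_{k−q}, u_{k+r−q}) = ∑_{l=−p+1}^{p} ∑_{m=−p+1}^{p} A_{lm} · h(u_{k+l}, u_{k+m}).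 -/
/-!
The index change `l = -q`, `m = r - q` maps the pairs `(r, q)` with `1 ≤ r ≤ p`, `0 ≤ q < r`
bijectively onto the pairs `(l, m)` with `l ≤ 0 < m` and `m - l ≤ p`, so the flux is
`∑ B_{lm} h(u_{k+l}, u_{k+m})`, where `B_{lm} = c_{m-l}` on that block and `0` elsewhere.
The matrix `A` is `(B + Bᵀ)/2`, and since `h` is symmetric, `B` and `Bᵀ` give the same sum.
-/

open Finset

theorem sum_Icc_sum_range_eq_sum_sum_Icc {M : Type*} [AddCommMonoid M] (p : ℕ)
    (g : ℤ → ℤ → M) (hg : ∀ l m : ℤ, ¬(l ≤ 0 ∧ 0 < m ∧ m - l ≤ p) → g l m = 0) :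
    ∑ r ∈ Icc 1 p, ∑ q ∈ range r, g (-q) (r - q) =
      ∑ l ∈ Icc (-(p : ℤ) + 1) p, ∑ m ∈ Icc (-(p : ℤ) + 1) p, g l m := by
  rw [sum_sigma', ← sum_product', ← sum_subset (filter_subset
    (fun x : ℤ × ℤ => x.1 ≤ 0 ∧ 0 < x.2 ∧ x.2 - x.1 ≤ p) (Icc (-(p : ℤ) + 1) p ×ˢ Icc _ _))]
  · refine sum_nbij' (fun x => (-(x.2 : ℤ), (x.1 : ℤ) - x.2))
      (fun y => ⟨(y.2 - y.1).toNat, (-y.1).toNat⟩) ?_ ?_ ?_ ?_ (fun _ _ => rfl)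
    · simp only [mem_sigma, mem_Icc, mem_range, mem_filter, mem_product]
      omega
    · simp only [mem_sigma, mem_Icc, mem_range, mem_filter, mem_product]
      omega
    · rintro ⟨r, q⟩ -
      simp
    · rintro ⟨l, m⟩ hlm
      simp only [mem_filter, mem_product, mem_Icc] at hlm
      simp only [Prod.mk.injEq]
      omega
  · rintro ⟨l, m⟩ hlm hP
    exact hg l m fun h => hP (mem_filter.2 ⟨hlm, h⟩)

theorem sum_sum_add_swap {ι M : Type*} [AddCommMonoid M] (s : Finset ι) (f : ι → ι → M) :
    ∑ l ∈ s, ∑ m ∈ s, (f l m + f m l) = 2 • ∑ l ∈ s, ∑ m ∈ s, f l m := by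
  simp only [sum_add_distrib]
  rw [sum_comm (f := fun l m => f m l), two_nsmul]

noncomputable section

variable (p : ℕ) (c : ℕ → ℝ)

def lmrCoeff (l m : ℤ) : ℝ :=
  if min l m ≤ 0 ∧ 0 < max l m ∧ (l - m).natAbs ≤ p then c (l - m).natAbs / 2 else 0

def lmrUpperCoeff (l m : ℤ) : ℝ :=
  if l ≤ 0 ∧ 0 < m ∧ m - l ≤ p then c (m - l).natAbs / 2 else 0

theorem lmrCoeff_eq_lmrUpperCoeff_add_swap (l m : ℤ) :
    lmrCoeff p c l m = lmrUpperCoeff p c l m + lmrUpperCoeff p c m l := by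
  have hlm : (l - m).natAbs = (m - l).natAbs := by omega
  simp only [lmrCoeff, lmrUpperCoeff, hlm]
  split_ifs <;> first | omega | simp

theorem lmrUpperCoeff_neg_sub {r q : ℕ} (hr : r ≤ p) (hq : q < r) :
    lmrUpperCoeff p c (-q) (r - q) = c r / 2 := by
  have hrq : ((r : ℤ) - q - -q).natAbs = r := by omega
  rw [lmrUpperCoeff, if_pos (by omega), hrq]

end

theorem lmr_flux_matrix_representation_general
    (N : ℕ)
    (h : EuclideanSpace ℝ (Fin N) × EuclideanSpace ℝ (Fin N) → EuclideanSpace ℝ (Fin N))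
    (hsym : ∀ a b, h (a, b) = h (b, a))
    (u : ℤ → EuclideanSpace ℝ (Fin N))
    (p : ℕ) (c : ℕ → ℝ)
    (A : ℤ → ℤ → ℝ)
    (hA : ∀ l m : ℤ, A l m =
      if min l m ≤ 0 ∧ 0 < max l m ∧ (l - m).natAbs ≤ p then c (l - m).natAbs / 2 else 0)
    (k : ℤ) :
    (∑ r ∈ Finset.Icc 1 p, c r •
        ∑ q ∈ Finset.range r, h (u (k - (q : ℤ)), u (k + (r : ℤ) - (q : ℤ))))
      = ∑ l ∈ Finset.Icc (-(p : ℤ) + 1) (p : ℤ), ∑ m ∈ Finset.Icc (-(p : ℤ) + 1) (p : ℤ),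
          A l m • h (u (k + l), u (k + m)) := by
  set H : ℤ → ℤ → EuclideanSpace ℝ (Fin N) := fun l m => h (u (k + l), u (k + m))
  set f : ℤ → ℤ → EuclideanSpace ℝ (Fin N) := fun l m => lmrUpperCoeff p c l m • H l m
  have hsplit : ∀ l m, A l m • H l m = f l m + f m l := fun l m => by
    simp only [f]
    rw [hA, ← lmrCoeff, lmrCoeff_eq_lmrUpperCoeff_add_swap, add_smul,
      show H m l = H l m from hsym _ _]
  have hterm : ∀ r ∈ Icc 1 p, ∀ q ∈ range r,
      (c r / 2) • h (u (k - q), u (k + r - q)) = f (-q) (r - q) := by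
    intro r hr q hq
    simp only [f, H]
    rw [lmrUpperCoeff_neg_sub p c (mem_Icc.1 hr).2 (mem_range.1 hq), sub_eq_add_neg k,
      add_sub_assoc]
  calc ∑ r ∈ Icc 1 p, c r • ∑ q ∈ range r, h (u (k - q), u (k + r - q))
      = 2 • ∑ r ∈ Icc 1 p, ∑ q ∈ range r, (c r / 2) • h (u (k - q), u (k + r - q)) := by
        simp only [smul_sum, ← smul_assoc, two_nsmul, add_halves]
    _ = ∑ l ∈ Icc (-(p : ℤ) + 1) p, ∑ m ∈ Icc (-(p : ℤ) + 1) p, A l m • H l m := by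
        rw [sum_congr rfl fun r hr => sum_congr rfl (hterm r hr),
          sum_Icc_sum_range_eq_sum_sum_Icc p f fun l m hP => by
            simp only [f, lmrUpperCoeff, if_neg hP, zero_smul]]
        simp only [hsplit, sum_sum_add_swap]

/-- Matrix representation of the LMR flux: for a symmetric two-point flux `h`, the flux
`∑_{r=1}^{p} c_r ∑_{q=0}^{r−1} h(u_{k−q}, u_{k+r−q})` equals
`∑_{l,m=−p+1}^{p} A_{lm} h(u_{k+l}, u_{k+m})` where `A_{lm} = c_{|l−m|}/2` when
`min(l,m) ≤ 0 < max(l,m)` and `|l−m| ≤ p`, and `A_{lm} = 0` otherwise. -/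
theorem lmr_flux_matrix_representation
    (N : ℕ) (hN : 1 ≤ N)
    (h : EuclideanSpace ℝ (Fin N) × EuclideanSpace ℝ (Fin N) → EuclideanSpace ℝ (Fin N))
    (hsym : ∀ a b, h (a, b) = h (b, a))
    (u : ℤ → EuclideanSpace ℝ (Fin N))
    (p : ℕ) (hp : 1 ≤ p) (c : ℕ → ℝ)
    (A : ℤ → ℤ → ℝ)
    (hA : ∀ l m : ℤ, A l m =
      if min l m ≤ 0 ∧ 0 < max l m ∧ (l - m).natAbs ≤ p then c (l - m).natAbs / 2 else 0)
    (k : ℤ) :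
    (∑ r ∈ Finset.Icc 1 p, c r •
        ∑ q ∈ Finset.range r, h (u (k - (q : ℤ)), u (k + (r : ℤ) - (q : ℤ))))
      = ∑ l ∈ Finset.Icc (-(p : ℤ) + 1) (p : ℤ), ∑ m ∈ Finset.Icc (-(p : ℤ) + 1) (p : ℤ),
          A l m • h (u (k + l), u (k + m)) :=
  lmr_flux_matrix_representation_general N h hsym u p c A hA k
end

section
/- Let p ≥ 1, let z be an integer with 0 ≤ z ≤ 2p, and set Z := {−z, −z+1, …, 2p−z} (so 0 ∈ Z and |Z| = 2p+1). Let h : E × E → E be a C^∞ two-point flux that is symmetric and consistent with f : E → E, and let u : ℝ → E be C^∞. Let A, B : Z × Z → ℝ satisfy A_{lm} = B_{lm} whenever l ≠ 0 and m ≠ 0, and A_{00} = B_{00}, and suppose the vector w_l := (B_{0l} − A_{0l}) + (B_{l0} − A_{l0}) satisfies w_0 = 0 and the moment conditions ∑_{l ∈ Z} w_l · l^j = 2 (if j = 1) and = 0 (otherwise) for every j ∈ {0, …, 2p−1}. Then for every x ∈ ℝ, the function Δ ↦ ∑_{l,m ∈ Z} B_{lm} h(u(x + lΔ), u(x + mΔ))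 − ∑_{l,m ∈ Z} A_{lm} h(u(x + lΔ), u(x + mΔ)) − Δ · (f ∘ u)'(x) is O(Δ^{2p}) as Δ → 0; i.e., the two non-centered linear combination fluxes together form a finite-difference approximation of ∂_x f(u) of order 2p−1. -/
open Filter Topology Asymptotics

lemma taylor_remainder_isBigO {E : Type*} [NormedAddCommGroup E] [NormedSpace ℝ E]
    (n : ℕ) :
    ∀ (G : ℝ → E), ContDiff ℝ (⊤ : ℕ∞) G →
    (fun t : ℝ => G t - ∑ j ∈ Finset.range n, (t ^ j / (j.factorial : ℝ)) • iteratedDeriv j G 0)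
      =O[𝓝 (0:ℝ)] fun t => t ^ n := by
  induction n with
  | zero =>
    intro G hG
    simp only [Finset.range_zero, Finset.sum_empty, sub_zero, pow_zero]
    exact (hG.continuous.tendsto 0).isBigO_one ℝ
  | succ n ih =>
    intro G hG
    have hG' : ContDiff ℝ (⊤ : ℕ∞) (deriv G) := (contDiff_infty_iff_deriv.mp hG).2
    have hRderiv : ∀ t : ℝ, HasDerivAt
        (fun t : ℝ => G t - ∑ j ∈ Finset.range (n+1), (t ^ j / (j.factorial : ℝ)) • iteratedDeriv j G 0)
        (deriv G t - ∑ j ∈ Finset.range n, (t ^ j / (j.factorial : ℝ)) • iteratedDeriv j (deriv G) 0) t := by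
      intro t
      have h1 : HasDerivAt G (deriv G t) t := ((hG.differentiable (by simp)) t).hasDerivAt
      have h2 : HasDerivAt
          (fun t : ℝ => ∑ j ∈ Finset.range (n+1), (t ^ j / (j.factorial : ℝ)) • iteratedDeriv j G 0)
          (∑ j ∈ Finset.range (n+1), (((j : ℝ) * t ^ (j-1)) / (j.factorial : ℝ)) • iteratedDeriv j G 0) t := by
        apply HasDerivAt.fun_sum
        intro j _
        exact ((hasDerivAt_pow j t).div_const _).smul_const _
      have h3 : (∑ j ∈ Finset.range (n+1), (((j : ℝ) * t ^ (j-1)) / (j.factorial : ℝ)) • iteratedDeriv j G 0)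
          = ∑ j ∈ Finset.range n, (t ^ j / (j.factorial : ℝ)) • iteratedDeriv j (deriv G) 0 := by
        rw [Finset.sum_range_succ']
        simp only [Nat.cast_zero, zero_mul, Nat.factorial_zero, zero_div, zero_smul, add_zero]
        refine Finset.sum_congr rfl fun i _ => ?_
        rw [← iteratedDeriv_succ', Nat.add_sub_cancel]
        congr 1
        rw [Nat.factorial_succ, Nat.cast_mul]
        push_cast
        have h4 : (i : ℝ) + 1 ≠ 0 := by positivity
        have h5 : ((i.factorial : ℝ) : ℝ) ≠ 0 := by positivity
        field_simp
      rw [← h3]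
      exact h1.sub h2
    obtain ⟨C, hC0, hCev⟩ := (ih (deriv G) hG').exists_pos
    rw [IsBigOWith] at hCev
    obtain ⟨δ, hδ, hball⟩ := Metric.eventually_nhds_iff.mp hCev
    rw [Asymptotics.isBigO_iff]
    refine ⟨C, Metric.eventually_nhds_iff.mpr ⟨δ, hδ, fun t ht => ?_⟩⟩
    have habs : ∀ s ∈ Set.uIcc (0:ℝ) t, |s| ≤ |t| := by
      intro s hs
      rw [Set.uIcc_eq_union] at hs
      rcases hs with hs | hs
      · rcases hs with ⟨h1, h2⟩; rw [abs_of_nonneg h1]; exact le_trans h2 (le_abs_self t)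
      · rcases hs with ⟨h1, h2⟩; rw [abs_of_nonpos h2]
        exact le_trans (neg_le_neg h1) (neg_le_abs t)
    have hbound : ∀ s ∈ Set.uIcc (0:ℝ) t,
        ‖deriv G s - ∑ j ∈ Finset.range n, (s ^ j / (j.factorial : ℝ)) • iteratedDeriv j (deriv G) 0‖
          ≤ C * |t| ^ n := by
      intro s hs
      have hds : dist s 0 < δ := by
        rw [Real.dist_eq, sub_zero]
        exact lt_of_le_of_lt (habs s hs) (by rwa [Real.dist_eq, sub_zero] at ht)
      refine le_trans (hball hds) ?_
      rw [norm_pow, Real.norm_eq_abs]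
      exact mul_le_mul_of_nonneg_left (pow_le_pow_left₀ (abs_nonneg s) (habs s hs) n) hC0.le
    have hmv := Convex.norm_image_sub_le_of_norm_hasDerivWithin_le
      (f := fun t : ℝ => G t - ∑ j ∈ Finset.range (n+1), (t ^ j / (j.factorial : ℝ)) • iteratedDeriv j G 0)
      (fun s _ => (hRderiv s).hasDerivWithinAt) hbound (convex_uIcc 0 t)
      Set.left_mem_uIcc Set.right_mem_uIcc
    have hR0 : (G 0 - ∑ j ∈ Finset.range (n+1), ((0:ℝ) ^ j / (j.factorial : ℝ)) • iteratedDeriv j G 0) = 0 := by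
      rw [Finset.sum_range_succ']
      simp [iteratedDeriv_zero]
    simp only [hR0, sub_zero, Real.norm_eq_abs] at hmv
    refine hmv.trans (le_of_eq ?_)
    rw [norm_pow, Real.norm_eq_abs, pow_succ]
    ring

/-- Non-centered high-order fluxes: let `Z = {−z, …, 2p−z}`, let `h` be a smooth,
symmetric two-point flux consistent with `f`, let `u` be smooth, and let `A, B` agree
off the row and column of index `0` (and at `(0,0)`) with difference vector
`w_l = (B_{0l} − A_{0l}) + (B_{l0} − A_{l0})` satisfying `w_0 = 0` and the moment
conditions `∑_{l ∈ Z} w_l l^j = 2δ_{j1}` for `j = 0, …, 2p−1`. Then the difference of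
the two linear combination fluxes approximates `Δ·(f∘u)'(x)` with error `O(Δ^{2p})`. -/
theorem noncentered_flux_pair_order_of_accuracy
    (N : ℕ) (hN : 1 ≤ N)
    (p : ℕ) (hp : 1 ≤ p)
    (z : ℤ) (hz0 : 0 ≤ z) (hz1 : z ≤ 2 * (p : ℤ))
    (h : EuclideanSpace ℝ (Fin N) × EuclideanSpace ℝ (Fin N) → EuclideanSpace ℝ (Fin N))
    (hsmooth : ContDiff ℝ (⊤ : ℕ∞) h)
    (hsym : ∀ a b, h (a, b) = h (b, a))
    (f : EuclideanSpace ℝ (Fin N) → EuclideanSpace ℝ (Fin N))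
    (hcons : ∀ a, h (a, a) = f a)
    (u : ℝ → EuclideanSpace ℝ (Fin N)) (hu : ContDiff ℝ (⊤ : ℕ∞) u)
    (A B : ℤ → ℤ → ℝ)
    (hAB : ∀ l m : ℤ, l ≠ 0 → m ≠ 0 → A l m = B l m)
    (h00 : A 0 0 = B 0 0)
    (w : ℤ → ℝ)
    (hw : ∀ l : ℤ, w l = (B 0 l - A 0 l) + (B l 0 - A l 0))
    (hw0 : w 0 = 0)
    (hmom : ∀ j < 2 * p,
      ∑ l ∈ Finset.Icc (-z) (2 * (p : ℤ) - z), w l * (l : ℝ) ^ j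
        = if j = 1 then 2 else 0)
    (x : ℝ) :
    (fun Δ : ℝ =>
        (∑ l ∈ Finset.Icc (-z) (2 * (p : ℤ) - z), ∑ m ∈ Finset.Icc (-z) (2 * (p : ℤ) - z),
            B l m • h (u (x + (l : ℝ) * Δ), u (x + (m : ℝ) * Δ)))
          - (∑ l ∈ Finset.Icc (-z) (2 * (p : ℤ) - z), ∑ m ∈ Finset.Icc (-z) (2 * (p : ℤ) - z),
              A l m • h (u (x + (l : ℝ) * Δ), u (x + (m : ℝ) * Δ)))
          - Δ • deriv (fun t => f (u t)) x)
      =O[𝓝[≠] (0 : ℝ)] fun Δ : ℝ => Δ ^ (2 * p) := by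
  classical
  set S : Finset ℤ := Finset.Icc (-z) (2 * (p : ℤ) - z) with hSdef
  have h0S : (0 : ℤ) ∈ S := by
    rw [hSdef, Finset.mem_Icc]; omega
  have h1lt : 1 < 2 * p := by omega
  have hsm : ContDiff ℝ (⊤ : ℕ∞) h := hsmooth.of_le (by simp)
  have hum : ContDiff ℝ (⊤ : ℕ∞) u := hu.of_le (by simp)
  set G : ℝ → EuclideanSpace ℝ (Fin N) := fun s => h (u x, u (x + s)) with hGdef
  have hGsm : ContDiff ℝ (⊤ : ℕ∞) G :=
    hsm.comp (contDiff_const.prodMk (hum.comp (contDiff_const.add contDiff_id)))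
  set du : EuclideanSpace ℝ (Fin N) := deriv u x with hdu
  have hu' : HasDerivAt u du x := ((hum.differentiable (by simp)) x).hasDerivAt
  set D := fderiv ℝ h (u x, u x) with hD
  have hhd : HasFDerivAt h D (u x, u x) :=
    ((hsm.differentiable (by simp)) (u x, u x)).hasFDerivAt
  -- symmetry of the differential on the diagonal
  have hDsym : ∀ v w : EuclideanSpace ℝ (Fin N), D (v, w) = D (w, v) := by
    set e := ContinuousLinearEquiv.prodComm ℝ (EuclideanSpace ℝ (Fin N)) (EuclideanSpace ℝ (Fin N))
      with hedef
    have hcomp : HasFDerivAt (h ∘ e) (D.comp (e : _ →L[ℝ] _)) (u x, u x) :=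
      HasFDerivAt.comp _ hhd e.hasFDerivAt
    have hhe : (h ∘ e) = h := funext fun q => by
      show h (q.2, q.1) = h q
      rw [hsym q.2 q.1]
    rw [hhe] at hcomp
    have hDeq : D = D.comp (e : _ →L[ℝ] _) := hhd.unique hcomp
    intro v w'
    conv_lhs => rw [hDeq]
    rfl
  -- derivative of f ∘ u
  have hfu : HasDerivAt (fun t => f (u t)) (D (du, du)) x := by
    have h1 : HasDerivAt (fun t => h (u t, u t)) (D (du, du)) x :=
      hhd.comp_hasDerivAt x (hu'.prodMk hu')
    have h2 : (fun t => h (u t, u t)) = fun t => f (u t) := funext fun t => hcons (u t)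
    rwa [h2] at h1
  -- derivative of G at 0
  have hG' : HasDerivAt G (D (0, du)) 0 := by
    have hinner : HasDerivAt (fun s : ℝ => u (x + s)) du 0 := by
      have hadd : HasDerivAt (fun s : ℝ => x + s) 1 0 := by
        simpa using (hasDerivAt_id (0 : ℝ)).const_add x
      have hux : HasDerivAt u du (x + 0) := by simpa using hu'
      have := hux.scomp 0 hadd
      simp only [one_smul] at this
      exact this
    have hpair : HasDerivAt (fun s : ℝ => (u x, u (x + s))) (0, du) 0 :=
      (hasDerivAt_const 0 (u x)).prodMk hinner
    have hhd0 : HasFDerivAt h D (u x, u (x + 0)) := by simpa using hhd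
    exact hhd0.comp_hasDerivAt 0 hpair
  set c : ℕ → EuclideanSpace ℝ (Fin N) := fun j => iteratedDeriv j G 0 with hcdef
  have hc1 : c 1 = D (0, du) := by rw [hcdef]; simp only [iteratedDeriv_one]; exact hG'.deriv
  have hd : deriv (fun t => f (u t)) x = 2 • c 1 := by
    rw [hfu.deriv, hc1]
    have : (du, du) = ((du, 0) : _ × _) + (0, du) := by simp
    rw [this, map_add, hDsym du 0, two_smul]
  set n := 2 * p with hn
  -- combinatorial identity
  have key : ∀ Δ : ℝ,
      (∑ l ∈ S, ∑ m ∈ S, B l m • h (u (x + (l : ℝ) * Δ), u (x + (m : ℝ) * Δ)))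
        - (∑ l ∈ S, ∑ m ∈ S, A l m • h (u (x + (l : ℝ) * Δ), u (x + (m : ℝ) * Δ)))
      = ∑ l ∈ S, w l • G ((l : ℝ) * Δ) := by
    intro Δ
    rw [← Finset.sum_sub_distrib]
    simp only [← Finset.sum_sub_distrib, ← sub_smul]
    have hrow : ∀ l ∈ S, l ≠ 0 →
        ∑ m ∈ S, (B l m - A l m) • h (u (x + (l : ℝ) * Δ), u (x + (m : ℝ) * Δ))
          = (B l 0 - A l 0) • G ((l : ℝ) * Δ) := by
      intro l _ hl0
      rw [Finset.sum_eq_single_of_mem 0 h0S]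
      · simp only [Int.cast_zero, zero_mul, add_zero, hGdef]
        rw [hsym]
      · intro m _ hm0
        rw [← hAB l m hl0 hm0, sub_self, zero_smul]
    rw [← Finset.add_sum_erase S _ h0S]
    have hl0term : ∑ m ∈ S, (B 0 m - A 0 m) • h (u (x + ((0 : ℤ) : ℝ) * Δ), u (x + (m : ℝ) * Δ))
        = ∑ m ∈ S, (B 0 m - A 0 m) • G ((m : ℝ) * Δ) := by
      refine Finset.sum_congr rfl fun m _ => ?_
      simp only [Int.cast_zero, zero_mul, add_zero, hGdef]
    have herase : ∑ l ∈ S.erase 0,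
          ∑ m ∈ S, (B l m - A l m) • h (u (x + (l : ℝ) * Δ), u (x + (m : ℝ) * Δ))
        = ∑ l ∈ S, (B l 0 - A l 0) • G ((l : ℝ) * Δ) := by
      rw [Finset.sum_congr rfl fun l hl =>
        hrow l (Finset.mem_of_mem_erase hl) (Finset.ne_of_mem_erase hl)]
      exact Finset.sum_erase S (by rw [h00, sub_self, zero_smul])
    rw [hl0term, herase, ← Finset.sum_add_distrib]
    exact Finset.sum_congr rfl fun l _ => by rw [hw l, add_smul]
  -- moment identity for the Taylor polynomial part
  have hT : ∀ Δ : ℝ,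
      ∑ l ∈ S, w l • (∑ j ∈ Finset.range n, (((l : ℝ) * Δ) ^ j / (j.factorial : ℝ)) • c j)
        = Δ • (2 • c 1) := by
    intro Δ
    have step1 : ∀ l ∈ S, w l • (∑ j ∈ Finset.range n, (((l : ℝ) * Δ) ^ j / (j.factorial : ℝ)) • c j)
        = ∑ j ∈ Finset.range n, ((w l * (l : ℝ) ^ j) * (Δ ^ j / (j.factorial : ℝ))) • c j := by
      intro l _
      rw [Finset.smul_sum]
      refine Finset.sum_congr rfl fun j _ => ?_
      rw [smul_smul, mul_pow]
      congr 1
      ring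
    rw [Finset.sum_congr rfl step1, Finset.sum_comm]
    have step2 : ∀ j ∈ Finset.range n,
        ∑ l ∈ S, ((w l * (l : ℝ) ^ j) * (Δ ^ j / (j.factorial : ℝ))) • c j
          = ((if j = 1 then (2 : ℝ) else 0) * (Δ ^ j / (j.factorial : ℝ))) • c j := by
      intro j hj
      rw [← Finset.sum_smul, ← Finset.sum_mul, hmom j (by rw [hn] at hj; exact Finset.mem_range.mp hj)]
    rw [Finset.sum_congr rfl step2]
    rw [Finset.sum_eq_single_of_mem 1 (Finset.mem_range.mpr h1lt)]
    · rw [if_pos rfl, pow_one, Nat.factorial_one, Nat.cast_one, div_one, two_mul, add_smul,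
        two_smul, smul_add]
    · intro j _ hj1
      rw [if_neg hj1, zero_mul, zero_smul]
  -- assemble
  have hrem := taylor_remainder_isBigO n G hGsm
  have hbig : (fun Δ : ℝ => ∑ l ∈ S, w l •
        (G ((l : ℝ) * Δ) - ∑ j ∈ Finset.range n, (((l : ℝ) * Δ) ^ j / (j.factorial : ℝ)) • c j))
      =O[𝓝 (0 : ℝ)] fun Δ => Δ ^ n := by
    apply Asymptotics.IsBigO.fun_sum
    intro l _
    have htend : Filter.Tendsto (fun Δ : ℝ => (l : ℝ) * Δ) (𝓝 0) (𝓝 0) := by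
      have := (continuous_const.fun_mul continuous_id : Continuous fun Δ : ℝ => (l : ℝ) * Δ).tendsto 0
      simpa using this
    have h1 := (hrem.comp_tendsto htend).const_smul_left (w l)
    refine h1.trans ?_
    have h2 : (fun Δ : ℝ => ((l : ℝ) * Δ) ^ n) = fun Δ : ℝ => (l : ℝ) ^ n * Δ ^ n := by
      funext Δ; rw [mul_pow]
    simp only [Function.comp_def]
    rw [h2]
    exact (Asymptotics.isBigO_refl (fun Δ : ℝ => Δ ^ n) (𝓝 0)).const_mul_left _
  have heq : (fun Δ : ℝ =>
        (∑ l ∈ S, ∑ m ∈ S, B l m • h (u (x + (l : ℝ) * Δ), u (x + (m : ℝ) * Δ)))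
          - (∑ l ∈ S, ∑ m ∈ S, A l m • h (u (x + (l : ℝ) * Δ), u (x + (m : ℝ) * Δ)))
          - Δ • deriv (fun t => f (u t)) x)
      = fun Δ : ℝ => ∑ l ∈ S, w l •
          (G ((l : ℝ) * Δ) - ∑ j ∈ Finset.range n, (((l : ℝ) * Δ) ^ j / (j.factorial : ℝ)) • c j) := by
    funext Δ
    rw [key Δ, hd]
    have hsplit : ∑ l ∈ S, w l • G ((l : ℝ) * Δ)
        = (∑ l ∈ S, w l •
            (G ((l : ℝ) * Δ) - ∑ j ∈ Finset.range n, (((l : ℝ) * Δ) ^ j / (j.factorial : ℝ)) • c j))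
          + ∑ l ∈ S, w l • (∑ j ∈ Finset.range n, (((l : ℝ) * Δ) ^ j / (j.factorial : ℝ)) • c j) := by
      rw [← Finset.sum_add_distrib]
      refine Finset.sum_congr rfl fun l _ => ?_
      rw [← smul_add, sub_add_cancel]
    rw [hsplit, hT Δ]
    abel
  rw [heq]
  exact hbig.mono nhdsWithin_le_nhds
end

section
/- Let Z be a finite set of integers with 0 ∈ Z. Let h be an entropy conservative two-point flux with respect to entropy variables v and potential ψ, with associated numerical entropy flux H. Let A, B : Z × Z → ℝ satisfy: A_{lm} = B_{lm} whenever l ≠ 0 and m ≠ 0, and ∑_{l,m ∈ Z} A_{lm} = ∑_{l,m ∈ Z} B_{lm}. Then for every family of states u : Z → E, the entropy conservation identity holds: ⟨v(u_0), ∑_{l,m ∈ Z} A_{lm} h(u_l, u_m) − ∑_{l,m ∈ Z} B_{lm} h(u_l, u_m)⟩ = ∑_{l,m ∈ Z} A_{lm} H(u_l, u_m) − ∑_{l,m ∈ Z} B_{lm} H(u_l, u_m). In particular, the pair of linear combination fluxes defined by A and B is entropy conservative with associated entropy fluxes given by the same linear combinations of H. -/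
open RealInnerProductSpace

/-! Entropy conservation of `h` amounts to `⟪v a, h (a, b)⟫ - H a b = ψ a` and
`⟪v b, h (a, b)⟫ - H a b = ψ b`. The difference `A - B` of the coefficient matrices is supported
on the row and column of index `0`, so every term `(A - B)_{lm} (⟪v u₀, h (u_l, u_m)⟫ - H (u_l, u_m))`
equals `(A - B)_{lm} ψ u₀`, and these add up to `ψ u₀ ∑ (A - B)_{lm} = 0`. -/

theorem Finset.sum_sum_mul_eq_sum_sum_mul_of_ne_zero {ι κ R : Type*} [CommSemiring R]
    (s : Finset ι) (t : Finset κ) (C f : ι → κ → R) (c : R)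
    (hf : ∀ l m, C l m ≠ 0 → f l m = c) :
    ∑ l ∈ s, ∑ m ∈ t, C l m * f l m = (∑ l ∈ s, ∑ m ∈ t, C l m) * c := by
  rw [Finset.sum_mul]
  refine Finset.sum_congr rfl fun l _ => ?_
  rw [Finset.sum_mul]
  refine Finset.sum_congr rfl fun m _ => ?_
  by_cases hC : C l m = 0
  · simp [hC]
  · rw [hf l m hC]

section EntropyConservative

variable {E : Type*} [NormedAddCommGroup E] [InnerProductSpace ℝ E]

def IsEntropyConservative (v : E → E) (ψ : E → ℝ) (h : E × E → E) : Prop :=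
  ∀ a b, ⟪v b - v a, h (a, b)⟫ = ψ b - ψ a

noncomputable def entropyFlux (v : E → E) (ψ : E → ℝ) (h : E × E → E) (a b : E) : ℝ :=
  (1 / 2) * ⟪v a + v b, h (a, b)⟫ - (1 / 2) * (ψ a + ψ b)

variable {v : E → E} {ψ : E → ℝ} {h : E × E → E}

namespace IsEntropyConservative

theorem inner_left_sub_entropyFlux (hEC : IsEntropyConservative v ψ h) (a b : E) :
    ⟪v a, h (a, b)⟫ - entropyFlux v ψ h a b = ψ a := by
  have := hEC a b
  rw [inner_sub_left] at this
  rw [entropyFlux, inner_add_left]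
  linarith

theorem inner_right_sub_entropyFlux (hEC : IsEntropyConservative v ψ h) (a b : E) :
    ⟪v b, h (a, b)⟫ - entropyFlux v ψ h a b = ψ b := by
  have := hEC a b
  rw [inner_sub_left] at this
  rw [entropyFlux, inner_add_left]
  linarith

theorem inner_sum_sub_sum_entropyFlux {ι : Type*} (hEC : IsEntropyConservative v ψ h)
    (s : Finset ι) (C : ι → ι → ℝ) (u : ι → E) (i : ι)
    (hC : ∀ l m, l ≠ i → m ≠ i → C l m = 0) :
    ⟪v (u i), ∑ l ∈ s, ∑ m ∈ s, C l m • h (u l, u m)⟫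
        - ∑ l ∈ s, ∑ m ∈ s, C l m * entropyFlux v ψ h (u l) (u m)
      = (∑ l ∈ s, ∑ m ∈ s, C l m) * ψ (u i) := by
  have hterm : ∀ l m, C l m ≠ 0 →
      ⟪v (u i), h (u l, u m)⟫ - entropyFlux v ψ h (u l) (u m) = ψ (u i) := by
    intro l m hlm
    by_cases hl : l = i
    · subst hl
      exact hEC.inner_left_sub_entropyFlux _ _
    · obtain rfl : m = i := by
        by_contra hm
        exact hlm (hC l m hl hm)
      exact hEC.inner_right_sub_entropyFlux _ _
  calc _ = ∑ l ∈ s, ∑ m ∈ s,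
        C l m * (⟪v (u i), h (u l, u m)⟫ - entropyFlux v ψ h (u l) (u m)) := by
        simp only [inner_sum, inner_smul_right, mul_sub, Finset.sum_sub_distrib]
    _ = _ := Finset.sum_sum_mul_eq_sum_sum_mul_of_ne_zero _ _ _ _ _ hterm

end IsEntropyConservative

end EntropyConservative

theorem linear_combination_flux_entropy_conservation_general
    (N : ℕ)
    (Z : Finset ℤ)
    (h : EuclideanSpace ℝ (Fin N) × EuclideanSpace ℝ (Fin N) → EuclideanSpace ℝ (Fin N))
    (v : EuclideanSpace ℝ (Fin N) → EuclideanSpace ℝ (Fin N))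
    (ψ : EuclideanSpace ℝ (Fin N) → ℝ)
    (hEC : ∀ a b, ⟪v b - v a, h (a, b)⟫ = ψ b - ψ a)
    (H : EuclideanSpace ℝ (Fin N) → EuclideanSpace ℝ (Fin N) → ℝ)
    (hH : ∀ a b, H a b = (1 / 2) * ⟪v a + v b, h (a, b)⟫ - (1 / 2) * (ψ a + ψ b))
    (A B : ℤ → ℤ → ℝ)
    (hAB : ∀ l m : ℤ, l ≠ 0 → m ≠ 0 → A l m = B l m)
    (hsum : ∑ l ∈ Z, ∑ m ∈ Z, A l m = ∑ l ∈ Z, ∑ m ∈ Z, B l m) :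
    ∀ u : ℤ → EuclideanSpace ℝ (Fin N),
      ⟪v (u 0),
          (∑ l ∈ Z, ∑ m ∈ Z, A l m • h (u l, u m))
            - (∑ l ∈ Z, ∑ m ∈ Z, B l m • h (u l, u m))⟫
        = (∑ l ∈ Z, ∑ m ∈ Z, A l m * H (u l) (u m))
            - (∑ l ∈ Z, ∑ m ∈ Z, B l m * H (u l) (u m)) := by
  intro u
  obtain rfl : H = entropyFlux v ψ h := funext₂ hH
  have hsupport : ∀ l m, l ≠ 0 → m ≠ 0 → (A - B) l m = 0 := fun l m hl hm => by
    simp [hAB l m hl hm]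
  have key := IsEntropyConservative.inner_sum_sub_sum_entropyFlux hEC Z (A - B) u 0 hsupport
  simp only [Pi.sub_apply, sub_smul, sub_mul, Finset.sum_sub_distrib] at key
  rwa [hsum, sub_self, sub_eq_zero] at key

/-- Entropy conservation for a pair of linear combination fluxes: if `h` is an entropy
conservative two-point flux with numerical entropy flux `H`, and the coefficient
matrices `A`, `B` agree off the row and column of index `0` and have the same total sum,
then `⟨v(u_0), ∑ A_{lm} h(u_l,u_m) − ∑ B_{lm} h(u_l,u_m)⟩
  = ∑ A_{lm} H(u_l,u_m) − ∑ B_{lm} H(u_l,u_m)`. -/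
theorem linear_combination_flux_entropy_conservation
    (N : ℕ) (hN : 1 ≤ N)
    (Z : Finset ℤ) (h0 : (0 : ℤ) ∈ Z)
    (h : EuclideanSpace ℝ (Fin N) × EuclideanSpace ℝ (Fin N) → EuclideanSpace ℝ (Fin N))
    (v : EuclideanSpace ℝ (Fin N) → EuclideanSpace ℝ (Fin N))
    (ψ : EuclideanSpace ℝ (Fin N) → ℝ)
    (hEC : ∀ a b, ⟪v b - v a, h (a, b)⟫ = ψ b - ψ a)
    (H : EuclideanSpace ℝ (Fin N) → EuclideanSpace ℝ (Fin N) → ℝ)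
    (hH : ∀ a b, H a b = (1 / 2) * ⟪v a + v b, h (a, b)⟫ - (1 / 2) * (ψ a + ψ b))
    (A B : ℤ → ℤ → ℝ)
    (hAB : ∀ l m : ℤ, l ≠ 0 → m ≠ 0 → A l m = B l m)
    (hsum : ∑ l ∈ Z, ∑ m ∈ Z, A l m = ∑ l ∈ Z, ∑ m ∈ Z, B l m) :
    ∀ u : ℤ → EuclideanSpace ℝ (Fin N),
      ⟪v (u 0),
          (∑ l ∈ Z, ∑ m ∈ Z, A l m • h (u l, u m))
            - (∑ l ∈ Z, ∑ m ∈ Z, B l m • h (u l, u m))⟫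
        = (∑ l ∈ Z, ∑ m ∈ Z, A l m * H (u l) (u m))
            - (∑ l ∈ Z, ∑ m ∈ Z, B l m * H (u l) (u m)) :=
  linear_combination_flux_entropy_conservation_general N Z h v ψ hEC H hH A B hAB hsum
end
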